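/- Fix a parameter k* ≥ 0. For every pair of node-adjacent n-node graphs G and G', the quantities k_G and k_{G'} differ by at most 1, i.e. |k_G − k_{G'}| ≤ 1. -/

import Mathlib

open MeasureTheory Finset
open scoped Classical

noncomputable section

/-- Two `n`-node graphs are node-adjacent if every edge in the symmetric
difference of their edge sets is incident to a single vertex `i`. -/
def NodeAdjacent {n : ℕ} (G G' : SimpleGraph (Fin n)) : Prop :=
  ∃ i : Fin n, ∀ u v : Fin n, ¬ (G.Adj u v ↔ G'.Adj u v) → u = i ∨ v = i

/-- `G` and `G'` are at node distance at most `c`: there is a path of length `c`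
of consecutively node-adjacent graphs from `G` to `G'`. -/
def NodeDistLE {n : ℕ} (G G' : SimpleGraph (Fin n)) (c : ℕ) : Prop :=
  ∃ g : ℕ → SimpleGraph (Fin n), g 0 = G ∧ g c = G' ∧
    ∀ j < c, NodeAdjacent (g j) (g (j + 1))

/-- `(ε,δ)`-node-differential privacy for a randomized algorithm, viewed as a map
assigning to each graph a (probability) measure on the output space `R`. -/
def NodeDP {n : ℕ} {R : Type*} [MeasurableSpace R]
    (A : SimpleGraph (Fin n) → Measure R) (ε δ : ℝ) : Prop :=
  ∀ G G' : SimpleGraph (Fin n), NodeAdjacent G G' → ∀ S : Set R, MeasurableSet S →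
    ((A G) S).toReal ≤ Real.exp ε * ((A G') S).toReal + δ

/-- Number of edges of `G`. -/
def edgeCount {n : ℕ} (G : SimpleGraph (Fin n)) : ℕ := G.edgeSet.ncard

/-- The empirical edge density `p_G = |E| / C(n,2)`. -/
def edgeDensity {n : ℕ} (G : SimpleGraph (Fin n)) : ℝ :=
  (edgeCount G : ℝ) / (n.choose 2 : ℝ)

/-- Degree of a vertex. -/
def deg {n : ℕ} (G : SimpleGraph (Fin n)) (v : Fin n) : ℕ := (G.neighborSet v).ncard

/-- Average degree `d̄_G = 2|E|/n  ( = (n-1)·p_G )`. -/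
def avgDeg {n : ℕ} (G : SimpleGraph (Fin n)) : ℝ := 2 * (edgeCount G : ℝ) / n

/-- `G ∈ 𝒢_{n,k}` : every degree lies in `[d̄ - k, d̄ + k]`. -/
def Concentrated {n : ℕ} (G : SimpleGraph (Fin n)) (k : ℝ) : Prop :=
  ∀ v : Fin n, |(deg G v : ℝ) - avgDeg G| ≤ k

/-- The number of vertices whose degree lies outside `[d̄_G - k* - 3m, d̄_G + k* + 3m]`. -/
def farCount {n : ℕ} (G : SimpleGraph (Fin n)) (kstar : ℝ) (m : ℕ) : ℕ :=
  {v : Fin n | kstar + 3 * (m : ℝ) < |(deg G v : ℝ) - avgDeg G|}.ncard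

/-- `k_G` : the smallest positive integer `m` such that at most `m` vertices have
degree outside `[d̄_G - k* - 3m, d̄_G + k* + 3m]`. -/
def kOf {n : ℕ} (G : SimpleGraph (Fin n)) (kstar : ℝ) : ℕ :=
  sInf {m : ℕ | 0 < m ∧ farCount G kstar m ≤ m}

/-- `t_v` : the distance from `deg_G(v)` to the interval `I_G`. -/
def tDist {n : ℕ} (G : SimpleGraph (Fin n)) (kstar : ℝ) (v : Fin n) : ℝ :=
  max 0 (|(deg G v : ℝ) - avgDeg G| - (kstar + 3 * (kOf G kstar : ℝ)))

/-- The weight `wt_G(v) = max(0, 1 - β t_v)`. -/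
def wt {n : ℕ} (G : SimpleGraph (Fin n)) (kstar β : ℝ) (v : Fin n) : ℝ :=
  max 0 (1 - β * tDist G kstar v)

/-- The value of the pair `{u,v}`:
`val_G({u,v}) = wt_G({u,v})·x_{uv} + (1 - wt_G({u,v}))·p_G`,
where `wt_G({u,v}) = min(wt_G(u), wt_G(v))`. -/
def valPair {n : ℕ} (G : SimpleGraph (Fin n)) (kstar β : ℝ) (u v : Fin n) : ℝ :=
  min (wt G kstar β u) (wt G kstar β v) * (if G.Adj u v then 1 else 0)
    + (1 - min (wt G kstar β u) (wt G kstar β v)) * edgeDensity G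

/-- `f(G)` : the sum of `val_G({u,v})` over unordered pairs of distinct vertices. -/
def fEst {n : ℕ} (G : SimpleGraph (Fin n)) (kstar β : ℝ) : ℝ :=
  (∑ u : Fin n, ∑ v : Fin n, if u ≠ v then valPair G kstar β u v else 0) / 2

/-- `f_u(G) = Σ_{v ≠ u} val_G({u,v})`. -/
def fVert {n : ℕ} (G : SimpleGraph (Fin n)) (kstar β : ℝ) (u : Fin n) : ℝ :=
  ∑ v ∈ Finset.univ.erase u, valPair G kstar β u v

/-- The smooth upper bound
`S(G) = sup_{ℓ ≥ 0} e^{-βℓ} · C·((k_G+ℓ+k*)(1+β(k_G+ℓ)) + 1/β)`. -/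
def smoothS {n : ℕ} (G : SimpleGraph (Fin n)) (kstar β C : ℝ) : ℝ :=
  ⨆ ℓ : {x : ℝ // 0 ≤ x},
    Real.exp (-β * (ℓ : ℝ)) *
      (C * (((kOf G kstar : ℝ) + (ℓ : ℝ) + kstar) * (1 + β * ((kOf G kstar : ℝ) + (ℓ : ℝ))) + 1 / β))

/-- The Student's t-distribution with 3 degrees of freedom, as a measure on `ℝ`. -/
def studentT3 : Measure ℝ :=
  MeasureTheory.volume.withDensity
    (fun z => ENNReal.ofReal (2 / (Real.sqrt 3 * Real.pi * (1 + z ^ 2 / 3) ^ 2)))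

/-- The disjoint union of cliques on `Fin n` given by a block-assignment `π`. -/
def cliqueUnion {n i : ℕ} (π : Fin n → Fin i) : SimpleGraph (Fin n) where
  Adj u v := u ≠ v ∧ π u = π v
  symm := ⟨fun u v h => ⟨Ne.symm h.1, h.2.symm⟩⟩
  loopless := ⟨fun u h => h.1 rfl⟩

/-
Away from the vertex `i` at which `G` and `G'` differ, every degree moves by at most `1`, and
the average degree moves by at most `2`, so the deviation `|deg v - d̄|` of every vertex
`v ≠ i` moves by at most `3`. Hence a vertex that is far from `I_{G'}` at level `m + 1` is
either `i` or far from `I_G` at level `m`, so `m = k_G` witnesses `k_{G'} ≤ k_G + 1`.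
Symmetry gives the other inequality.
-/

theorem NodeAdjacent.symm {n : ℕ} {G G' : SimpleGraph (Fin n)} (h : NodeAdjacent G G') :
    NodeAdjacent G' G := by
  obtain ⟨i, hi⟩ := h
  exact ⟨i, fun u v huv => hi u v fun h' => huv h'.symm⟩

section Degrees

variable {n : ℕ}

theorem deg_eq_degree (G : SimpleGraph (Fin n)) (v : Fin n) : deg G v = G.degree v := by
  rw [deg, ← G.card_neighborSet_eq_degree, ← Nat.card_eq_fintype_card, Nat.card_coe_set_eq]

theorem deg_le (G : SimpleGraph (Fin n)) (v : Fin n) : deg G v ≤ n := by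
  simpa [deg_eq_degree] using (G.degree_lt_card_verts v).le

theorem sum_deg (G : SimpleGraph (Fin n)) : ∑ v, deg G v = 2 * edgeCount G := by
  simp only [deg_eq_degree, G.sum_degrees_eq_twice_card_edges, edgeCount,
    SimpleGraph.edgeFinset, Set.ncard_eq_toFinset_card']

theorem avgDeg_eq_sum_div (G : SimpleGraph (Fin n)) : avgDeg G = (∑ v, (deg G v : ℝ)) / n := by
  rw [avgDeg, ← Nat.cast_sum, sum_deg]
  push_cast
  rfl

variable {G G' : SimpleGraph (Fin n)} {i : Fin n}

theorem deg_le_deg_add_one (hi : ∀ u v, ¬ (G.Adj u v ↔ G'.Adj u v) → u = i ∨ v = i)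
    {v : Fin n} (hv : v ≠ i) : deg G' v ≤ deg G v + 1 := by
  have hsub : G'.neighborSet v ⊆ insert i (G.neighborSet v) := by
    intro u hu
    by_cases hui : u = i
    · exact hui ▸ Set.mem_insert _ _
    · refine Set.mem_insert_of_mem _ (not_not.mp fun hG => ?_)
      exact (hi v u fun hiff => hG (hiff.mpr hu)).elim hv hui
  calc deg G' v ≤ (insert i (G.neighborSet v)).ncard := Set.ncard_le_ncard hsub
    _ ≤ deg G v + 1 := Set.ncard_insert_le _ _

theorem abs_deg_sub_deg_le_one (hi : ∀ u v, ¬ (G.Adj u v ↔ G'.Adj u v) → u = i ∨ v = i)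
    {v : Fin n} (hv : v ≠ i) : |(deg G v : ℝ) - deg G' v| ≤ 1 := by
  have h₁ : (deg G' v : ℝ) ≤ deg G v + 1 := mod_cast deg_le_deg_add_one hi hv
  have h₂ : (deg G v : ℝ) ≤ deg G' v + 1 :=
    mod_cast deg_le_deg_add_one (fun u w huw => hi u w fun h' => huw h'.symm) hv
  rw [abs_sub_le_iff]
  constructor <;> linarith

theorem abs_avgDeg_sub_avgDeg_le_two (hi : ∀ u v, ¬ (G.Adj u v ↔ G'.Adj u v) → u = i ∨ v = i) :
    |avgDeg G - avgDeg G'| ≤ 2 := by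
  have hn : (0 : ℝ) < n := by exact_mod_cast i.pos
  rw [avgDeg_eq_sum_div, avgDeg_eq_sum_div, div_sub_div_same, ← Finset.sum_sub_distrib,
    abs_div, abs_of_pos hn, div_le_iff₀ hn]
  have hdeg_i : |(deg G i : ℝ) - deg G' i| ≤ n := by
    have h₁ : (deg G i : ℝ) ≤ n := mod_cast deg_le G i
    have h₂ : (deg G' i : ℝ) ≤ n := mod_cast deg_le G' i
    rw [abs_sub_le_iff]
    constructor <;> linarith [(deg G i).cast_nonneg (α := ℝ), (deg G' i).cast_nonneg (α := ℝ)]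
  have hdeg_rest : ∑ v ∈ univ.erase i, |(deg G v : ℝ) - deg G' v| ≤ n := by
    calc ∑ v ∈ univ.erase i, |(deg G v : ℝ) - deg G' v|
        ≤ ∑ _v ∈ univ.erase i, (1 : ℝ) :=
          sum_le_sum fun v hv => abs_deg_sub_deg_le_one hi (ne_of_mem_erase hv)
      _ ≤ n := by simp
  calc |∑ v, ((deg G v : ℝ) - deg G' v)|
      ≤ ∑ v, |(deg G v : ℝ) - deg G' v| := abs_sum_le_sum_abs _ _
    _ = |(deg G i : ℝ) - deg G' i| + ∑ v ∈ univ.erase i, |(deg G v : ℝ) - deg G' v| :=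
        (add_sum_erase _ _ (mem_univ i)).symm
    _ ≤ 2 * n := by linarith

theorem abs_deg_sub_avgDeg_le (hi : ∀ u v, ¬ (G.Adj u v ↔ G'.Adj u v) → u = i ∨ v = i)
    {v : Fin n} (hv : v ≠ i) :
    |(deg G' v : ℝ) - avgDeg G'| ≤ |(deg G v : ℝ) - avgDeg G| + 3 := by
  have hdeg := abs_deg_sub_deg_le_one hi hv
  have havg := abs_avgDeg_sub_avgDeg_le_two hi
  calc |(deg G' v : ℝ) - avgDeg G'|
      = |((deg G v : ℝ) - avgDeg G) - ((deg G v : ℝ) - deg G' v) + (avgDeg G - avgDeg G')| := by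
        ring_nf
    _ ≤ |(deg G v : ℝ) - avgDeg G| + |(deg G v : ℝ) - deg G' v| + |avgDeg G - avgDeg G'| :=
        (abs_add_le _ _).trans (add_le_add_left (abs_sub _ _) _)
    _ ≤ |(deg G v : ℝ) - avgDeg G| + 3 := by linarith

end Degrees

section KOf

variable {n : ℕ} {kstar : ℝ}

theorem farCount_le (G : SimpleGraph (Fin n)) (m : ℕ) : farCount G kstar m ≤ n := by
  simpa [farCount, Set.ncard_univ] using Set.ncard_le_ncard (Set.subset_univ
    {v : Fin n | kstar + 3 * (m : ℝ) < |(deg G v : ℝ) - avgDeg G|})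

theorem farCount_succ_le_of_nodeAdjacent {G G' : SimpleGraph (Fin n)} (h : NodeAdjacent G G')
    (m : ℕ) : farCount G' kstar (m + 1) ≤ farCount G kstar m + 1 := by
  obtain ⟨i, hi⟩ := h
  have hsub : {v : Fin n | kstar + 3 * ((m + 1 : ℕ) : ℝ) < |(deg G' v : ℝ) - avgDeg G'|} ⊆
      insert i {v : Fin n | kstar + 3 * (m : ℝ) < |(deg G v : ℝ) - avgDeg G|} := by
    intro v hv
    by_cases hvi : v = i
    · exact hvi ▸ Set.mem_insert _ _
    · have hv' : kstar + 3 * ((m : ℝ) + 1) < |(deg G' v : ℝ) - avgDeg G'| := by simpa using hv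
      have := abs_deg_sub_avgDeg_le hi hvi
      exact Set.mem_insert_of_mem _ (show kstar + 3 * (m : ℝ) < _ by linarith)
  exact (Set.ncard_le_ncard hsub).trans (Set.ncard_insert_le _ _)

theorem kOf_le {G : SimpleGraph (Fin n)} {m : ℕ} (hm : 0 < m) (hfar : farCount G kstar m ≤ m) :
    kOf G kstar ≤ m :=
  Nat.sInf_le ⟨hm, hfar⟩

theorem farCount_kOf_le (G : SimpleGraph (Fin n)) : farCount G kstar (kOf G kstar) ≤ kOf G kstar :=
  (Nat.sInf_mem (s := {m | 0 < m ∧ farCount G kstar m ≤ m})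
    ⟨n + 1, n.succ_pos, (farCount_le G _).trans n.le_succ⟩).2

theorem kOf_le_kOf_add_one {G G' : SimpleGraph (Fin n)} (h : NodeAdjacent G G') :
    kOf G' kstar ≤ kOf G kstar + 1 :=
  kOf_le (Nat.succ_pos _)
    ((farCount_succ_le_of_nodeAdjacent h _).trans (Nat.succ_le_succ (farCount_kOf_le G)))

end KOf

theorem kOf_adjacent_general {n : ℕ} (kstar : ℝ)
    (G G' : SimpleGraph (Fin n)) (h : NodeAdjacent G G') :
    |(kOf G kstar : ℤ) - (kOf G' kstar : ℤ)| ≤ 1 := by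
  have h₁ := kOf_le_kOf_add_one (kstar := kstar) h
  have h₂ := kOf_le_kOf_add_one (kstar := kstar) h.symm
  rw [abs_le]
  omega

/-- for node-adjacent graphs, `k_G` and `k_{G'}` differ by at most 1. -/
theorem kOf_adjacent {n : ℕ} (kstar : ℝ) (hkstar : 0 ≤ kstar)
    (G G' : SimpleGraph (Fin n)) (h : NodeAdjacent G G') :
    |(kOf G kstar : ℤ) - (kOf G' kstar : ℤ)| ≤ 1 :=
  kOf_adjacent_general kstar G G' h

end
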